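/- arXiv:2507.20736 — 2 statements merged into one kernel-verified Lean document; each statement's English description precedes it below -/
import Mathlib

section
/- Let a₀ > 1/2 > a₁ > 0 with a₀ + a₁ = 1, and for odd l let a₁^{(l)} = ∑_{k=(l+1)/2}^{l} C(l,k)·a₀^{l-k}·a₁^k. Then a₁^{(l)} ≤ 2^{l} · (a₀ a₁)^{(l-1)/2} · a₁ · a₀/(a₀-a₁), and since 2√(a₀a₁) < 1, the quantity a₁^{(l)} tends to 0 exponentially fast as l → ∞. -/
lemma my_choose_le_two_pow (n k : ℕ) : n.choose k ≤ 2 ^ n := by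
  rcases le_or_gt k n with h | h
  · calc n.choose k ≤ ∑ m ∈ Finset.range (n + 1), n.choose m :=
        Finset.single_le_sum (fun i _ => Nat.zero_le _) (Finset.mem_range.2 (by omega))
    _ = 2 ^ n := Nat.sum_range_choose n
  · simp [Nat.choose_eq_zero_of_lt h]

theorem coarse_grained_disagreement_exponential_decay
    (a₀ a₁ : ℝ) (h1 : 0 < a₁) (hhalf : a₁ < 1 / 2) (hhalf' : 1 / 2 < a₀)
    (hsum : a₀ + a₁ = 1) :
    (∀ l : ℕ, Odd l →
      (∑ k ∈ Finset.Icc ((l + 1) / 2) l,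
          (l.choose k : ℝ) * a₀ ^ (l - k) * a₁ ^ k)
        ≤ (2 : ℝ) ^ l * (a₀ * a₁) ^ ((l - 1) / 2) * a₁ * (a₀ / (a₀ - a₁))) ∧
    2 * Real.sqrt (a₀ * a₁) < 1 ∧
    (∃ C : ℝ, 0 < C ∧ ∀ l : ℕ, Odd l →
      (∑ k ∈ Finset.Icc ((l + 1) / 2) l,
          (l.choose k : ℝ) * a₀ ^ (l - k) * a₁ ^ k)
        ≤ C * (2 * Real.sqrt (a₀ * a₁)) ^ l) := by
  have ha0 : (0:ℝ) < a₀ := lt_trans (by norm_num) hhalf'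
  have hlt : a₁ < a₀ := lt_trans hhalf hhalf'
  have hdiff : (0:ℝ) < a₀ - a₁ := sub_pos.2 hlt
  have ha0ne : a₀ ≠ 0 := ne_of_gt ha0
  have hr0 : (0:ℝ) ≤ a₁ / a₀ := le_of_lt (div_pos h1 ha0)
  have hr1 : a₁ / a₀ < 1 := (div_lt_one ha0).2 hlt
  have hprodpos : (0:ℝ) < a₀ * a₁ := mul_pos ha0 h1
  -- geometric series bound
  have hgeom : ∀ n : ℕ, ∑ j ∈ Finset.range n, (a₁ / a₀) ^ j ≤ a₀ / (a₀ - a₁) := by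
    intro n
    have hpow : (0:ℝ) ≤ (a₁ / a₀) ^ n := pow_nonneg hr0 n
    have h1r : (0:ℝ) < 1 - a₁ / a₀ := by linarith
    calc ∑ j ∈ Finset.range n, (a₁ / a₀) ^ j
        = (1 - (a₁/a₀)^n) / (1 - a₁/a₀) := by
          rw [geom_sum_eq (ne_of_lt hr1) n, ← neg_div_neg_eq]; ring_nf
      _ ≤ 1 / (1 - a₁/a₀) := by gcongr; linarith
      _ = a₀ / (a₀ - a₁) := by
          rw [show (1:ℝ) - a₁/a₀ = (a₀-a₁)/a₀ by field_simp, one_div_div]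
  -- main bound
  have key : ∀ l : ℕ, Odd l →
      (∑ k ∈ Finset.Icc ((l + 1) / 2) l,
          (l.choose k : ℝ) * a₀ ^ (l - k) * a₁ ^ k)
        ≤ (2 : ℝ) ^ l * (a₀ * a₁) ^ ((l - 1) / 2) * a₁ * (a₀ / (a₀ - a₁)) := by
    rintro l ⟨m, rfl⟩
    have h1' : (2*m+1+1)/2 = m+1 := by omega
    have h2' : (2*m+1-1)/2 = m := by omega
    rw [h1', h2']
    have step1 : (∑ k ∈ Finset.Icc (m+1) (2*m+1),
        ((2*m+1).choose k : ℝ) * a₀ ^ (2*m+1 - k) * a₁ ^ k)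
        ≤ ∑ k ∈ Finset.Icc (m+1) (2*m+1),
          (2:ℝ)^(2*m+1) * ((a₀*a₁)^m * a₁ * (a₁/a₀)^(k-(m+1))) := by
      apply Finset.sum_le_sum
      intro k hk
      rw [Finset.mem_Icc] at hk
      obtain ⟨hk1, hk2⟩ := hk
      have he : k - (m+1) ≤ m := by omega
      have heq : a₀ ^ (2*m+1-k) * a₁ ^ k = (a₀*a₁)^m * a₁ * (a₁/a₀)^(k-(m+1)) := by
        have h3 : 2*m+1-k = m - (k-(m+1)) := by omega
        have h4 : k = m + 1 + (k-(m+1)) := by omega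
        rw [h3]
        nth_rewrite 2 [h4]
        rw [pow_sub₀ _ ha0ne he, pow_add, pow_add, div_pow, mul_pow]
        field_simp
      have hch : ((2*m+1).choose k : ℝ) ≤ (2:ℝ)^(2*m+1) := by
        have := my_choose_le_two_pow (2*m+1) k
        exact_mod_cast this
      calc ((2*m+1).choose k : ℝ) * a₀ ^ (2*m+1 - k) * a₁ ^ k
          = ((2*m+1).choose k : ℝ) * (a₀ ^ (2*m+1 - k) * a₁ ^ k) := by ring
        _ ≤ (2:ℝ)^(2*m+1) * (a₀ ^ (2*m+1 - k) * a₁ ^ k) := by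
            apply mul_le_mul_of_nonneg_right hch
            positivity
        _ = (2:ℝ)^(2*m+1) * ((a₀*a₁)^m * a₁ * (a₁/a₀)^(k-(m+1))) := by rw [heq]
    have step2 : (∑ k ∈ Finset.Icc (m+1) (2*m+1),
          (2:ℝ)^(2*m+1) * ((a₀*a₁)^m * a₁ * (a₁/a₀)^(k-(m+1))))
        = (2:ℝ)^(2*m+1) * (a₀*a₁)^m * a₁ * ∑ j ∈ Finset.range (m+1), (a₁/a₀)^j := by
      have : Finset.Icc (m+1) (2*m+1) = Finset.Ico (m+1) (2*m+2) := by
        ext x; simp [Finset.mem_Icc, Finset.mem_Ico]; omega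
      rw [this, Finset.sum_Ico_eq_sum_range]
      have hn : 2*m+2 - (m+1) = m+1 := by omega
      rw [hn, Finset.mul_sum]
      apply Finset.sum_congr rfl
      intro j _
      have : m + 1 + j - (m+1) = j := by omega
      rw [this]; ring
    have hC : (0:ℝ) ≤ (2:ℝ)^(2*m+1) * (a₀*a₁)^m * a₁ := by positivity
    calc (∑ k ∈ Finset.Icc (m+1) (2*m+1),
        ((2*m+1).choose k : ℝ) * a₀ ^ (2*m+1 - k) * a₁ ^ k)
        ≤ (2:ℝ)^(2*m+1) * (a₀*a₁)^m * a₁ * ∑ j ∈ Finset.range (m+1), (a₁/a₀)^j := by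
          rw [← step2]; exact step1
      _ ≤ (2:ℝ)^(2*m+1) * (a₀*a₁)^m * a₁ * (a₀/(a₀-a₁)) :=
          mul_le_mul_of_nonneg_left (hgeom (m+1)) hC
  refine ⟨key, ?_, ?_⟩
  · -- 2 * sqrt (a₀ a₁) < 1
    have h14 : a₀ * a₁ < 1/4 := by nlinarith
    have : Real.sqrt (a₀ * a₁) < 1/2 := by
      rw [show (1:ℝ)/2 = Real.sqrt (1/4) by
        rw [show (1:ℝ)/4 = (1/2)^2 by norm_num, Real.sqrt_sq (by norm_num)]]
      exact Real.sqrt_lt_sqrt (le_of_lt hprodpos) h14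
    linarith
  · -- exponential decay with explicit C
    have hs : (0:ℝ) < Real.sqrt (a₀ * a₁) := Real.sqrt_pos.2 hprodpos
    refine ⟨a₀ * a₁ / ((a₀ - a₁) * Real.sqrt (a₀ * a₁)), by positivity, ?_⟩
    intro l hl
    obtain ⟨m, rfl⟩ := hl
    have heq : a₀ * a₁ / ((a₀ - a₁) * Real.sqrt (a₀ * a₁)) * (2 * Real.sqrt (a₀ * a₁)) ^ (2*m+1)
        = (2 : ℝ) ^ (2*m+1) * (a₀ * a₁) ^ ((2*m+1 - 1) / 2) * a₁ * (a₀ / (a₀ - a₁)) := by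
      have h2' : (2*m+1-1)/2 = m := by omega
      rw [h2', mul_pow]
      have hsp : Real.sqrt (a₀ * a₁) ^ (2*m+1) = (a₀*a₁)^m * Real.sqrt (a₀*a₁) := by
        rw [pow_succ, pow_mul, Real.sq_sqrt (le_of_lt hprodpos)]
      rw [hsp]
      field_simp
    rw [heq]
    exact key (2*m+1) ⟨m, rfl⟩
end

section
/- Let a₀ > a₁ > 0 with a₀ + a₁ = 1 and let l be odd. Then a₀^{(l)} = ∑_{k=0}^{(l-1)/2} C(l,k) a₀^{l-k} a₁^k is non-decreasing along odd l, in the sense that a₀^{(l+2)} ≥ a₀^{(l)}; equivalently, the probability that a Binomial(l, a₁) random variable is at most (l-1)/2 is non-decreasing in odd l when a₁ < 1/2. -/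
private lemma step_sum (a₀ a₁ : ℝ) (hsum : a₀ + a₁ = 1) (n t : ℕ) (ht : t ≤ n) :
    (∑ k ∈ Finset.range (t + 1), ((n + 1).choose k : ℝ) * a₀ ^ (n + 1 - k) * a₁ ^ k)
      = (∑ k ∈ Finset.range (t + 1), (n.choose k : ℝ) * a₀ ^ (n - k) * a₁ ^ k)
        - a₁ * ((n.choose t : ℝ) * a₀ ^ (n - t) * a₁ ^ t) := by
  induction t with
  | zero =>
      norm_num [Finset.sum_range_one, pow_succ]
      linear_combination a₀ ^ n * hsum
  | succ t ih =>
      have ht' : t ≤ n := by omega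
      have h1 : n + 1 - (t + 1) = (n - (t + 1)) + 1 := by omega
      have h2 : n - t = (n - (t + 1)) + 1 := by omega
      conv_rhs => rw [Finset.sum_range_succ]
      rw [Finset.sum_range_succ, ih ht', Nat.choose_succ_succ, h1, h2]
      push_cast
      linear_combination (↑(n.choose (t + 1)) * a₀ ^ (n - (t + 1)) * a₁ ^ (t + 1)) * hsum

theorem coarse_grained_agreement_monotone_in_l
    (a₀ a₁ : ℝ) (h1 : 0 < a₁) (h01 : a₁ < a₀) (hsum : a₀ + a₁ = 1)
    (l : ℕ) (hl : Odd l) :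
    (∑ k ∈ Finset.range ((l - 1) / 2 + 1),
        (l.choose k : ℝ) * a₀ ^ (l - k) * a₁ ^ k)
      ≤ ∑ k ∈ Finset.range (((l + 2) - 1) / 2 + 1),
        ((l + 2).choose k : ℝ) * a₀ ^ ((l + 2) - k) * a₁ ^ k := by
  obtain ⟨m, hm⟩ := hl
  subst hm
  have e1 : (2 * m + 1 - 1) / 2 = m := by omega
  have e2 : ((2 * m + 1 + 2) - 1) / 2 = m + 1 := by omega
  rw [e1, e2]
  have hA : 0 < a₀ := lt_trans h1 h01
  -- rewrite RHS via two applications of step_sum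
  have s1 := step_sum a₀ a₁ hsum (2 * m + 2) (m + 1) (by omega)
  have s2 := step_sum a₀ a₁ hsum (2 * m + 1) (m + 1) (by omega)
  have hre : (2 * m + 1 + 2) = (2 * m + 2) + 1 := by omega
  have hre2 : (2 * m + 2) = (2 * m + 1) + 1 := by omega
  have key : (∑ k ∈ Finset.range (m + 1 + 1),
        ((2 * m + 1 + 2).choose k : ℝ) * a₀ ^ ((2 * m + 1 + 2) - k) * a₁ ^ k)
      = (∑ k ∈ Finset.range (m + 1), ((2 * m + 1).choose k : ℝ)
            * a₀ ^ (2 * m + 1 - k) * a₁ ^ k)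
        + ((2 * m + 1).choose (m + 1) : ℝ) * a₀ ^ (2 * m + 1 - (m + 1)) * a₁ ^ (m + 1)
        - a₁ * (((2 * m + 1).choose (m + 1) : ℝ) * a₀ ^ (2 * m + 1 - (m + 1)) * a₁ ^ (m + 1))
        - a₁ * (((2 * m + 2).choose (m + 1) : ℝ) * a₀ ^ (2 * m + 2 - (m + 1)) * a₁ ^ (m + 1)) := by
    rw [hre, s1, hre2, s2, Finset.sum_range_succ]
  rw [key]
  have hc : ((2 * m + 2).choose (m + 1) : ℝ) = 2 * ((2 * m + 1).choose (m + 1) : ℝ) := by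
    have hsymm : (2 * m + 1).choose m = (2 * m + 1).choose (m + 1) := by
      have := Nat.choose_symm (n := 2 * m + 1) (k := m + 1) (by omega)
      have h' : 2 * m + 1 - (m + 1) = m := by omega
      rw [h'] at this
      exact this
    have : (2 * m + 2).choose (m + 1) = (2 * m + 1).choose m + (2 * m + 1).choose (m + 1) := by
      rw [hre2]
      exact Nat.choose_succ_succ (2 * m + 1) m
    rw [this, hsymm]
    push_cast
    ring
  have eexp1 : 2 * m + 1 - (m + 1) = m := by omega
  have eexp2 : 2 * m + 2 - (m + 1) = m + 1 := by omega
  rw [hc, eexp1, eexp2]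
  have hnn : (0:ℝ) ≤ ((2 * m + 1).choose (m + 1) : ℝ) * a₀ ^ (m + 1) * a₁ ^ (m + 1)
      * (a₀ - a₁) := by
    apply mul_nonneg
    · apply mul_nonneg
      · apply mul_nonneg (Nat.cast_nonneg _) (pow_nonneg hA.le _)
      · exact pow_nonneg h1.le _
    · linarith
  have hstuff : ((2 * m + 1).choose (m + 1) : ℝ) * a₀ ^ m * a₁ ^ (m + 1)
      - a₁ * (((2 * m + 1).choose (m + 1) : ℝ) * a₀ ^ m * a₁ ^ (m + 1))
      - a₁ * (2 * ((2 * m + 1).choose (m + 1) : ℝ) * a₀ ^ (m + 1) * a₁ ^ (m + 1))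
      = ((2 * m + 1).choose (m + 1) : ℝ) * a₀ ^ (m + 1) * a₁ ^ (m + 1) * (a₀ - a₁) := by
    rw [pow_succ]
    linear_combination (-(1 + a₀) * ((2 * m + 1).choose (m + 1) : ℝ)
      * a₀ ^ m * a₁ ^ (m + 1)) * hsum
  linarith [hnn, hstuff]
end
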